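/- arXiv:1803.04087 — 2 statements merged into one kernel-verified Lean document; each statement's English description precedes it below -/
import Mathlib

section
/- Consider the 4×4 symmetric matrix M with unit diagonal, M₁₂ = M₂₄ = M₃₄ = p, M₁₄ = q, and M₁₃ = M₂₃ = 0, with |p| < 1 and |q| < 1. Then the mutual incoherence quantity for node 2, namely |||[M₃₁ M₃₄] · ([[M₁₁, M₁₄],[M₄₁, M₄₄]])⁻¹|||_{∞,∞}, equals (|p||q| + |p|)/(1 − q²) = |p|/(1 − |q|), and it is strictly less than 1 if and only if |p| + |q| < 1. -/
/-- Mutual incoherence for node 2 of the illustrative 4-node binary Bayesian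
network: the quantity equals `(|p||q| + |p|)/(1 − q²) = |p|/(1 − |q|)` and is
strictly less than 1 iff `|p| + |q| < 1`. -/
theorem mutual_incoherence_node2 (p q : ℝ) (hp : |p| < 1) (hq : |q| < 1) :
    let M : Matrix (Fin 4) (Fin 4) ℝ :=
      !![1, p, 0, q; p, 1, 0, p; 0, 0, 1, p; q, p, p, 1]
    let r : Matrix (Fin 1) (Fin 2) ℝ := !![M 2 0, M 2 3]
    let K : Matrix (Fin 2) (Fin 2) ℝ := !![M 0 0, M 0 3; M 3 0, M 3 3]
    let Q : ℝ := ∑ j, |(r * K⁻¹) 0 j|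
    Q = (|p| * |q| + |p|) / (1 - q ^ 2) ∧ Q = |p| / (1 - |q|) ∧
      (Q < 1 ↔ |p| + |q| < 1) := by
  intro M r K Q
  have hq1 : 1 - |q| > 0 := by linarith
  have hq2 : (0:ℝ) < 1 - q ^ 2 := by
    have := abs_nonneg q
    nlinarith [sq_abs q]
  have hne : (1 - q ^ 2) ≠ 0 := ne_of_gt hq2
  have hK : K⁻¹ = !![1/(1-q^2), -q/(1-q^2); -q/(1-q^2), 1/(1-q^2)] := by
    apply Matrix.inv_eq_right_inv
    ext i j
    fin_cases i <;> fin_cases j <;>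
      simp [K, M, Matrix.mul_apply, Fin.sum_univ_two] <;> field_simp <;> ring
  have hQ : Q = (|p| * |q| + |p|) / (1 - q ^ 2) := by
    have : Q = |0 * (1/(1-q^2)) + p * (-q/(1-q^2))| + |0 * (-q/(1-q^2)) + p * (1/(1-q^2))| := by
      simp [Q, r, M, hK, Matrix.mul_apply, Fin.sum_univ_two]
    rw [this]
    rw [show 0 * (1/(1-q^2)) + p * (-q/(1-q^2)) = -(p*q)/(1-q^2) by ring,
        show 0 * (-q/(1-q^2)) + p * (1/(1-q^2)) = p/(1-q^2) by ring]
    rw [abs_div, abs_div, abs_neg, abs_mul, abs_of_pos hq2]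
    ring
  have hsq : 1 - q ^ 2 = (1 - |q|) * (1 + |q|) := by
    rw [← sq_abs q]; ring
  have hQ2 : Q = |p| / (1 - |q|) := by
    rw [hQ, hsq]
    rw [show |p| * |q| + |p| = |p| * (1 + |q|) by ring]
    rw [mul_comm (1 - |q|) (1 + |q|), ← div_div, mul_div_assoc]
    rw [div_self (by positivity), mul_one]
  refine ⟨hQ, hQ2, ?_⟩
  rw [hQ2, div_lt_one hq1]
  constructor <;> intro h <;> linarith
end

section
/- Suppose ‖A‖_{B,∞,1} ≤ 1 − α for α ∈ (0,1], ‖u‖_{∞,2} ≤ αλ/(4(1−α)), ‖Z‖_{∞,2} ≤ 1, and ‖v‖_{B,∞,2} ≤ αλ/4. Then ‖A u‖_{B,∞,2} + λ‖A Z‖_{B,∞,2} + ‖v‖_{B,∞,2} ≤ λ(1 − α/2) < λ, using the inequalities ‖Au‖_{B,∞,2} ≤ ‖A‖_{B,∞,1}‖u‖_{∞,2} and ‖AZ‖_{B,∞,2} ≤ ‖A‖_{B,∞,1}‖Z‖_{∞,2}. -/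
/-!
Each row of `B * W` is the combination `∑ j, B r j • W j` of rows of `W`, so by the triangle
inequality its Euclidean norm is at most `∑ j, |B r j| * ‖W‖_{∞,2}`; summing over the rows
and using `‖·‖₂ ≤ ‖·‖₁` across rows bounds each block of `A Z` and `A u` by
`‖A‖_{B,∞,1}‖·‖_{∞,2}`. The hypotheses then make the three terms at most `α λ / 4`,
`λ (1 - α)` and `α λ / 4`.
-/

open Finset

theorem Real.sqrt_sum_le_sum_sqrt {ι : Type*} (s : Finset ι) (f : ι → ℝ)
    (hf : ∀ i ∈ s, 0 ≤ f i) : √(∑ i ∈ s, f i) ≤ ∑ i ∈ s, √(f i) := by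
  rw [Real.sqrt_le_left (sum_nonneg fun i _ => Real.sqrt_nonneg _)]
  calc ∑ i ∈ s, f i = ∑ i ∈ s, √(f i) ^ 2 :=
        sum_congr rfl fun i hi => (Real.sq_sqrt (hf i hi)).symm
    _ ≤ (∑ i ∈ s, √(f i)) ^ 2 := sum_sq_le_sq_sum_of_nonneg fun i _ => Real.sqrt_nonneg _

section BlockNorms

variable {ι κ ρ : Type*} [Fintype ι] [Fintype κ] [Fintype ρ]

theorem sqrt_sum_sq_eq_norm_toLp (x : κ → ℝ) :
    √(∑ c, x c ^ 2) = ‖WithLp.toLp 2 x‖ := by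
  simp [EuclideanSpace.norm_eq, sq_abs]

theorem sqrt_sum_sq_sum_mul_le (a : ι → ℝ) (w : ι → κ → ℝ) :
    √(∑ c, (∑ j, a j * w j c) ^ 2) ≤ ∑ j, |a j| * √(∑ c, w j c ^ 2) := by
  have hcomb : (fun c => ∑ j, a j * w j c) = ∑ j, a j • w j := by
    funext c
    simp [Finset.sum_apply]
  calc √(∑ c, (∑ j, a j * w j c) ^ 2) = ‖∑ j, a j • WithLp.toLp 2 (w j)‖ := by
        rw [sqrt_sum_sq_eq_norm_toLp, hcomb, WithLp.toLp_sum]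
        simp only [WithLp.toLp_smul]
    _ ≤ ∑ j, ‖a j • WithLp.toLp 2 (w j)‖ := norm_sum_le _ _
    _ = ∑ j, |a j| * √(∑ c, w j c ^ 2) := by
        simp only [norm_smul, Real.norm_eq_abs, sqrt_sum_sq_eq_norm_toLp]

theorem sqrt_sum_sq_mul_le (B : Matrix ρ ι ℝ) (W : Matrix ι κ ℝ) {M : ℝ}
    (hW : ∀ j, √(∑ c, W j c ^ 2) ≤ M) :
    √(∑ r, ∑ c, (B * W) r c ^ 2) ≤ (∑ r, ∑ j, |B r j|) * M := by
  have hrow (r : ρ) : √(∑ c, (B * W) r c ^ 2) ≤ ∑ j, |B r j| * M := by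
    simp only [Matrix.mul_apply]
    exact (sqrt_sum_sq_sum_mul_le _ _).trans
      (sum_le_sum fun j _ => mul_le_mul_of_nonneg_left (hW j) (abs_nonneg _))
  calc √(∑ r, ∑ c, (B * W) r c ^ 2) ≤ ∑ r, √(∑ c, (B * W) r c ^ 2) :=
        Real.sqrt_sum_le_sum_sqrt _ _ fun r _ => sum_nonneg fun c _ => sq_nonneg _
    _ ≤ ∑ r, ∑ j, |B r j| * M := sum_le_sum fun r _ => hrow r
    _ = (∑ r, ∑ j, |B r j|) * M := by simp only [sum_mul]

theorem iSup_sqrt_sum_sq_mul_le {β : Type*} [Finite β] {σ : β → Type*} [∀ i, Fintype (σ i)]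
    (B : (i : β) → Matrix (σ i) ι ℝ) (W : Matrix ι κ ℝ) :
    (⨆ i, √(∑ r, ∑ c, (B i * W) r c ^ 2)) ≤
      (⨆ i, ∑ r, ∑ j, |B i r j|) * ⨆ j, √(∑ c, W j c ^ 2) := by
  have hB : 0 ≤ ⨆ i, ∑ r, ∑ j, |B i r j| :=
    Real.iSup_nonneg fun i => sum_nonneg fun r _ => sum_nonneg fun j _ => abs_nonneg _
  have hW : 0 ≤ ⨆ j, √(∑ c, W j c ^ 2) := Real.iSup_nonneg fun j => Real.sqrt_nonneg _
  refine Real.iSup_le (fun i => ?_) (mul_nonneg hB hW)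
  exact (sqrt_sum_sq_mul_le (B i) W fun j =>
    le_ciSup (f := fun j => √(∑ c, W j c ^ 2)) (Finite.bddAbove_range _) j).trans
    (mul_le_mul_of_nonneg_right
      (le_ciSup (f := fun i => ∑ r, ∑ j, |B i r j|) (Finite.bddAbove_range _) i) hW)

end BlockNorms

/-- Combining the mutual incoherence bound with the block norm inequalities:
`‖Au‖_{B,∞,2} + λ‖AZ‖_{B,∞,2} + ‖v‖_{B,∞,2} ≤ λ(1 − α/2) < λ`. -/
theorem dual_feasibility_bound {P n k : ℕ} (m : Fin P → ℕ)
    (A : (i : Fin P) → Matrix (Fin (m i)) (Fin n) ℝ)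
    (u Z : Matrix (Fin n) (Fin k) ℝ)
    (v : (i : Fin P) → Matrix (Fin (m i)) (Fin k) ℝ)
    (lam α : ℝ) (hlam : 0 < lam) (hα : 0 < α) (hα1 : α ≤ 1)
    (hA : (⨆ i, ∑ r, ∑ c, |A i r c|) ≤ 1 - α)
    (hu : (⨆ j : Fin n, Real.sqrt (∑ c, (u j c) ^ 2)) ≤ α * lam / (4 * (1 - α)))
    (hZ : (⨆ j : Fin n, Real.sqrt (∑ c, (Z j c) ^ 2)) ≤ 1)
    (hv : (⨆ i, Real.sqrt (∑ r, ∑ c, (v i r c) ^ 2)) ≤ α * lam / 4) :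
    (⨆ i, Real.sqrt (∑ r, ∑ c, ((A i * u) r c) ^ 2)) +
      lam * (⨆ i, Real.sqrt (∑ r, ∑ c, ((A i * Z) r c) ^ 2)) +
      (⨆ i, Real.sqrt (∑ r, ∑ c, (v i r c) ^ 2)) ≤ lam * (1 - α / 2) ∧
    lam * (1 - α / 2) < lam := by
  have h1α : 0 ≤ 1 - α := sub_nonneg.mpr hα1
  have hu0 : 0 ≤ ⨆ j : Fin n, √(∑ c, u j c ^ 2) := Real.iSup_nonneg fun j => Real.sqrt_nonneg _
  have hZ0 : 0 ≤ ⨆ j : Fin n, √(∑ c, Z j c ^ 2) := Real.iSup_nonneg fun j => Real.sqrt_nonneg _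
  -- At `α = 1` the bound in `hu` is the junk value `x / 0 = 0`; the factor `1 - α` kills it.
  have hscale : (1 - α) * (α * lam / (4 * (1 - α))) ≤ α * lam / 4 := by
    rcases h1α.eq_or_lt with h | h
    · rw [← h, zero_mul]; positivity
    · field_simp; rfl
  have hAu : (⨆ i, √(∑ r, ∑ c, (A i * u) r c ^ 2)) ≤ α * lam / 4 :=
    (iSup_sqrt_sum_sq_mul_le A u).trans <|
      (mul_le_mul hA hu hu0 h1α).trans hscale
  have hAZ : (⨆ i, √(∑ r, ∑ c, (A i * Z) r c ^ 2)) ≤ 1 - α :=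
    (iSup_sqrt_sum_sq_mul_le A Z).trans <| (mul_le_mul hA hZ hZ0 h1α).trans_eq (mul_one _)
  constructor
  · linarith [mul_le_mul_of_nonneg_left hAZ hlam.le]
  · linarith [mul_pos hlam hα]
end
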